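/- arXiv:math/9910005 — 3 statements merged into one kernel-verified Lean document; each statement's English description precedes it below -/
import Mathlib

section
/- Let S be a finite subset of ℝ, Λ a finite index set, and P, P' two probability measures on S^Λ giving positive weight to every configuration. Suppose that for every site i ∈ Λ and all configurations ξ ≤ ξ' (pointwise), the single-site conditional distribution of P at i given ξ off i is stochastically dominated by that of P' at i given ξ' off i. Then P is stochastically dominated by P', i.e., ∫ f dP ≤ ∫ f dP' for every monotone (coordinatewise increasing) function f : S^Λ → ℝ. -/
/-!
Run the random-scan Gibbs sampler of `P'` started from `P`. Since `P` is stationary for its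
own sampler, and Holley's envelope argument shows that one step of the two samplers preserves
stochastic domination, `P` is dominated by every iterate. A power of the sampler has strictly
positive entries, so by Doeblin's contraction the iterates converge to `P'`.
-/

open Finset Function Matrix Filter Topology

section Doeblin

variable {X : Type*} [Fintype X] [DecidableEq X] {M : Matrix X X ℝ}

lemma vecMul_dotProduct_one_of_mem_rowStochastic (hM : M ∈ rowStochastic ℝ X) (v : X → ℝ) :
    (v ᵥ* M) ⬝ᵥ 1 = v ⬝ᵥ 1 := by
  rw [← dotProduct_mulVec, hM.2]

lemma sum_abs_vecMul_le (hM : M ∈ rowStochastic ℝ X) {δ : ℝ} (hδ : ∀ x y, δ ≤ M x y)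
    {v : X → ℝ} (hv : v ⬝ᵥ 1 = 0) :
    ∑ y, |(v ᵥ* M) y| ≤ (1 - Fintype.card X * δ) * ∑ x, |v x| := by
  -- as `∑ x, v x = 0`, subtracting `δ` from every entry of `M` does not change `v ᵥ* M`
  have hsum : ∑ x, v x = 0 := by simpa [dotProduct] using hv
  have hshift : ∀ y, (v ᵥ* M) y = ∑ x, v x * (M x y - δ) := fun y => by
    simp only [mul_sub, sum_sub_distrib, ← sum_mul, hsum, zero_mul, sub_zero]
    rfl
  calc ∑ y, |(v ᵥ* M) y|
      ≤ ∑ y, ∑ x, |v x| * (M x y - δ) := by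
        refine sum_le_sum fun y _ => ?_
        rw [hshift]
        refine (abs_sum_le_sum_abs _ _).trans_eq (sum_congr rfl fun x _ => ?_)
        rw [abs_mul, abs_of_nonneg (sub_nonneg.2 (hδ x y))]
    _ = (1 - Fintype.card X * δ) * ∑ x, |v x| := by
        rw [sum_comm, mul_sum]
        refine sum_congr rfl fun x _ => ?_
        rw [← mul_sum, sum_sub_distrib, (mem_rowStochastic_iff_sum.1 hM).2, sum_const,
          card_univ, nsmul_eq_mul, mul_comm]

lemma tendsto_vecMul_pow_of_dotProduct_one_eq_zero (hM : M ∈ rowStochastic ℝ X)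
    (hpos : ∀ x y, 0 < M x y) {v : X → ℝ} (hv : v ⬝ᵥ 1 = 0) :
    Tendsto (fun k => v ᵥ* M ^ k) atTop (𝓝 0) := by
  rcases isEmpty_or_nonempty X with hX | hX
  · exact tendsto_const_nhds.congr fun _ => Subsingleton.elim _ _
  obtain ⟨p, hp⟩ := Finite.exists_min fun p : X × X => M p.1 p.2
  set r := 1 - Fintype.card X * M p.1 p.2
  have hr0 : 0 ≤ r := by
    have : Fintype.card X * M p.1 p.2 ≤ ∑ y, M p.1 y := by
      rw [← nsmul_eq_mul, ← card_univ, ← sum_const]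
      exact sum_le_sum fun y _ => hp (p.1, y)
    rw [(mem_rowStochastic_iff_sum.1 hM).2] at this
    linarith
  have hr1 : r < 1 := by
    have := mul_pos (Nat.cast_pos.2 Fintype.card_pos : (0 : ℝ) < Fintype.card X) (hpos p.1 p.2)
    linarith
  have hbound : ∀ k, ∑ y, |(v ᵥ* M ^ k) y| ≤ r ^ k * ∑ x, |v x| := by
    intro k
    induction k with
    | zero => simp
    | succ k ih =>
      have hvk : (v ᵥ* M ^ k) ⬝ᵥ 1 = 0 := by
        rw [vecMul_dotProduct_one_of_mem_rowStochastic (pow_mem hM k), hv]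
      rw [pow_succ, ← vecMul_vecMul, pow_succ', mul_assoc]
      exact (sum_abs_vecMul_le hM (fun x y => hp (x, y)) hvk).trans
        (mul_le_mul_of_nonneg_left ih hr0)
  have hgeom : Tendsto (fun k => r ^ k * ∑ x, |v x|) atTop (𝓝 0) := by
    simpa using (tendsto_pow_atTop_nhds_zero_of_lt_one hr0 hr1).mul_const (∑ x, |v x|)
  refine tendsto_pi_nhds.2 fun y => squeeze_zero_norm (fun k => ?_) hgeom
  exact (single_le_sum (f := fun y => |(v ᵥ* M ^ k) y|) (fun _ _ => abs_nonneg _)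
    (mem_univ y)).trans (hbound k)

lemma vecMul_pow_eq_self {π : X → ℝ} (hπ : π ᵥ* M = π) (k : ℕ) : π ᵥ* M ^ k = π := by
  induction k with
  | zero => simp
  | succ k ih => rw [pow_succ, ← vecMul_vecMul, ih, hπ]

lemma tendsto_vecMul_pow_of_vecMul_eq (hM : M ∈ rowStochastic ℝ X) (hpos : ∀ x y, 0 < M x y)
    {π μ : X → ℝ} (hπ : π ᵥ* M = π) (hμ : μ ⬝ᵥ 1 = π ⬝ᵥ 1) :
    Tendsto (fun k => μ ᵥ* M ^ k) atTop (𝓝 π) := by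
  have hsplit : ∀ k, μ ᵥ* M ^ k = π + (μ - π) ᵥ* M ^ k := fun k => by
    rw [sub_vecMul, vecMul_pow_eq_self hπ, add_sub_cancel]
  simpa [hsplit] using tendsto_const_nhds.add
    (tendsto_vecMul_pow_of_dotProduct_one_eq_zero hM hpos (v := μ - π) (by simp [hμ]))

end Doeblin

section StochasticDomination

variable {X : Type*} [Fintype X] [Preorder X]

def StochDominated (μ ν : X → ℝ) : Prop :=
  ∀ f : X → ℝ, Monotone f → μ ⬝ᵥ f ≤ ν ⬝ᵥ f

/-- Holley's envelope argument: `ξ ↦ sup_{ζ ≤ ξ} g ζ` is monotone and lies between `g` and `k`. -/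
lemma StochDominated.dotProduct_le {μ ν : X → ℝ} (h : StochDominated μ ν) (hμ : 0 ≤ μ)
    (hν : 0 ≤ ν) {g k : X → ℝ} (hgk : ∀ ζ ξ, ζ ≤ ξ → g ζ ≤ k ξ) : μ ⬝ᵥ g ≤ ν ⬝ᵥ k := by
  set e : X → ℝ := fun ξ => ⨆ ζ : {ζ // ζ ≤ ξ}, g ζ.1
  have hbdd : ∀ ξ, BddAbove (Set.range fun ζ : {ζ // ζ ≤ ξ} => g ζ.1) :=
    fun ξ => (Set.finite_range _).bddAbove
  have hge : ∀ ξ, g ξ ≤ e ξ := fun ξ =>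
    le_ciSup (f := fun ζ : {ζ // ζ ≤ ξ} => g ζ.1) (hbdd ξ) ⟨ξ, le_rfl⟩
  have hne : ∀ ξ : X, Nonempty {ζ // ζ ≤ ξ} := fun ξ => ⟨⟨ξ, le_rfl⟩⟩
  have hle : ∀ ξ, e ξ ≤ k ξ := fun ξ => ciSup_le fun ζ => hgk ζ.1 ξ ζ.2
  have hmono : Monotone e := fun ξ ξ' hξ => ciSup_le fun ζ =>
    le_ciSup (f := fun ζ : {ζ // ζ ≤ ξ'} => g ζ.1) (hbdd ξ') ⟨ζ, ζ.2.trans hξ⟩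
  calc μ ⬝ᵥ g ≤ μ ⬝ᵥ e := dotProduct_le_dotProduct_of_nonneg_left hge hμ
    _ ≤ ν ⬝ᵥ e := h e hmono
    _ ≤ ν ⬝ᵥ k := dotProduct_le_dotProduct_of_nonneg_left hle hν

lemma StochDominated.vecMul {μ ν : X → ℝ} (h : StochDominated μ ν) (hμ : 0 ≤ μ)
    (hν : 0 ≤ ν) {M N : Matrix X X ℝ} (hMN : ∀ ξ ξ', ξ ≤ ξ' → StochDominated (M ξ) (N ξ')) :
    StochDominated (μ ᵥ* M) (ν ᵥ* N) := by
  intro f hf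
  rw [← dotProduct_mulVec, ← dotProduct_mulVec]
  exact h.dotProduct_le hμ hν fun ζ ξ hζξ => hMN ζ ξ hζξ f hf

end StochasticDomination

section HeatBath

variable {Λ S : Type*} [DecidableEq Λ] [Fintype S] {P : (Λ → S) → ℝ}

lemma sum_update_pos (hP : ∀ ξ, 0 < P ξ) (ξ : Λ → S) (i : Λ) :
    0 < ∑ s, P (update ξ i s) :=
  sum_pos (fun _ _ => hP _) ⟨ξ i, mem_univ _⟩

variable [Fintype Λ] [DecidableEq S]

noncomputable def heatBath (P : (Λ → S) → ℝ) (i : Λ) : Matrix (Λ → S) (Λ → S) ℝ :=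
  of fun ξ η => if ∀ j ≠ i, ξ j = η j then P η / ∑ s, P (update ξ i s) else 0

lemma sum_ite_forall_ne_eq_sum_update (ξ : Λ → S) (i : Λ) (g : (Λ → S) → ℝ) :
    ∑ η, (if ∀ j ≠ i, ξ j = η j then g η else 0) = ∑ s, g (update ξ i s) := by
  have hfiber : ∀ η, (if ∀ j ≠ i, ξ j = η j then g η else 0) =
      ∑ s, if update ξ i s = η then g η else 0 := by
    intro η
    simp [update_eq_iff, ite_and]
  rw [sum_congr rfl fun η _ => hfiber η, sum_comm]
  simp

lemma heatBath_mulVec (P : (Λ → S) → ℝ) (i : Λ) (f : (Λ → S) → ℝ) (ξ : Λ → S) :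
    (heatBath P i *ᵥ f) ξ =
      (∑ s, P (update ξ i s) * f (update ξ i s)) / ∑ s, P (update ξ i s) := by
  simp only [mulVec, dotProduct, heatBath, of_apply, ite_mul, zero_mul]
  rw [sum_ite_forall_ne_eq_sum_update, sum_div]
  simp only [div_mul_eq_mul_div]

lemma heatBath_mem_rowStochastic (hP : ∀ ξ, 0 < P ξ) (i : Λ) :
    heatBath P i ∈ rowStochastic ℝ (Λ → S) := by
  refine ⟨fun ξ η => ?_, funext fun ξ => ?_⟩
  · rw [heatBath, of_apply]
    split_ifs
    exacts [div_nonneg (hP η).le (sum_update_pos hP ξ i).le, le_rfl]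
  · simp only [heatBath_mulVec, Pi.one_apply, mul_one]
    exact div_self (sum_update_pos hP ξ i).ne'

lemma heatBath_pos (hP : ∀ ξ, 0 < P ξ) {i : Λ} {ξ η : Λ → S} (h : ∀ j ≠ i, ξ j = η j) :
    0 < heatBath P i ξ η := by
  rw [heatBath, of_apply, if_pos h]
  exact div_pos (hP η) (sum_update_pos hP ξ i)

lemma vecMul_heatBath (hP : ∀ ξ, 0 < P ξ) (i : Λ) : P ᵥ* heatBath P i = P := by
  -- detailed balance: both sides vanish unless `ξ` and `η` agree off `i`, and then the two
  -- normalising sums coincide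
  have hbalance : ∀ ξ η, P ξ * heatBath P i ξ η = P η * heatBath P i η ξ := by
    intro ξ η
    by_cases h : ∀ j ≠ i, ξ j = η j
    · have hupd : ∀ s, update ξ i s = update η i s := fun s => by
        ext j
        by_cases hj : j = i
        · subst hj; simp
        · simp [hj, h j hj]
      have h' : ∀ j ≠ i, η j = ξ j := fun j hj => (h j hj).symm
      simp only [heatBath, of_apply, if_pos h, if_pos h', hupd]
      ring
    · have h' : ¬ ∀ j ≠ i, η j = ξ j := fun h' => h fun j hj => (h' j hj).symm
      simp only [heatBath, of_apply, if_neg h, if_neg h', mul_zero]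
  funext η
  have hrow := congrFun (heatBath_mem_rowStochastic hP i).2 η
  simp only [mulVec, dotProduct, Pi.one_apply, mul_one] at hrow
  simp only [vecMul, dotProduct, hbalance _ η, ← mul_sum, hrow, mul_one]

lemma stochDominated_heatBath [Preorder S] {P' : (Λ → S) → ℝ} (hP : ∀ ξ, 0 < P ξ)
    (hcond : ∀ (i : Λ) (ξ ξ' : Λ → S), ξ ≤ ξ' →
      ∀ g : S → ℝ, Monotone g →
        (∑ s : S, P (update ξ i s) * g s) / (∑ s : S, P (update ξ i s)) ≤
        (∑ s : S, P' (update ξ' i s) * g s) / (∑ s : S, P' (update ξ' i s)))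
    (i : Λ) {ξ ξ' : Λ → S} (hξ : ξ ≤ ξ') :
    StochDominated (heatBath P i ξ) (heatBath P' i ξ') := by
  intro f hf
  have hupd : ∀ s, update ξ i s ≤ update ξ' i s := fun s =>
    update_le_update_iff.2 ⟨le_rfl, fun j _ => hξ j⟩
  calc heatBath P i ξ ⬝ᵥ f
      = (∑ s, P (update ξ i s) * f (update ξ i s)) / ∑ s, P (update ξ i s) :=
        heatBath_mulVec P i f ξ
    _ ≤ (∑ s, P (update ξ i s) * f (update ξ' i s)) / ∑ s, P (update ξ i s) := by
        gcongr with s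
        exacts [(sum_update_pos hP ξ i).le, (hP _).le, hf (hupd s)]
    _ ≤ (∑ s, P' (update ξ' i s) * f (update ξ' i s)) / ∑ s, P' (update ξ' i s) :=
        hcond i ξ ξ' hξ _ (hf.comp update_mono)
    _ = heatBath P' i ξ' ⬝ᵥ f := (heatBath_mulVec P' i f ξ').symm

end HeatBath

section GibbsSampler

variable {Λ S : Type*} [Fintype Λ]

lemma inv_card_mul_card [Nonempty Λ] : (Fintype.card Λ : ℝ)⁻¹ * Fintype.card Λ = 1 :=
  inv_mul_cancel₀ (Nat.cast_ne_zero.2 Fintype.card_ne_zero)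

variable [DecidableEq Λ] [Fintype S] [DecidableEq S] {P : (Λ → S) → ℝ}

noncomputable def gibbsKernel (P : (Λ → S) → ℝ) : Matrix (Λ → S) (Λ → S) ℝ :=
  (Fintype.card Λ : ℝ)⁻¹ • ∑ i, heatBath P i

lemma gibbsKernel_mem_rowStochastic [Nonempty Λ] (hP : ∀ ξ, 0 < P ξ) :
    gibbsKernel P ∈ rowStochastic ℝ (Λ → S) := by
  refine ⟨fun ξ η => ?_, ?_⟩
  · simp only [gibbsKernel, Matrix.smul_apply, Matrix.sum_apply, smul_eq_mul]
    exact mul_nonneg (by positivity)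
      (sum_nonneg fun i _ => (heatBath_mem_rowStochastic hP i).1 ξ η)
  · simp only [gibbsKernel, smul_mulVec, sum_mulVec, (heatBath_mem_rowStochastic hP _).2,
      sum_const, card_univ, ← Nat.cast_smul_eq_nsmul ℝ, smul_smul, inv_card_mul_card, one_smul]

lemma vecMul_gibbsKernel [Nonempty Λ] (hP : ∀ ξ, 0 < P ξ) : P ᵥ* gibbsKernel P = P := by
  simp only [gibbsKernel, vecMul_smul, vecMul_sum, vecMul_heatBath hP, sum_const, card_univ,
    ← Nat.cast_smul_eq_nsmul ℝ, smul_smul, inv_card_mul_card, one_smul]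

lemma stochDominated_gibbsKernel [Preorder S] {P' : (Λ → S) → ℝ}
    (hK : ∀ i {ξ ξ' : Λ → S}, ξ ≤ ξ' → StochDominated (heatBath P i ξ) (heatBath P' i ξ'))
    {ξ ξ' : Λ → S} (hξ : ξ ≤ ξ') : StochDominated (gibbsKernel P ξ) (gibbsKernel P' ξ') := by
  intro f hf
  have hrow : ∀ (Q : (Λ → S) → ℝ) ζ, (gibbsKernel Q *ᵥ f) ζ =
      (Fintype.card Λ : ℝ)⁻¹ * ∑ i, (heatBath Q i *ᵥ f) ζ := fun Q ζ => by
    simp only [gibbsKernel, smul_mulVec, sum_mulVec, Pi.smul_apply, Finset.sum_apply, smul_eq_mul]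
  change (gibbsKernel P *ᵥ f) ξ ≤ (gibbsKernel P' *ᵥ f) ξ'
  rw [hrow, hrow]
  gcongr with i
  exact hK i hξ f hf

lemma gibbsKernel_pos (hP : ∀ ξ, 0 < P ξ) {i : Λ} {ξ η : Λ → S} (h : ∀ j ≠ i, ξ j = η j) :
    0 < gibbsKernel P ξ η := by
  have : Nonempty Λ := ⟨i⟩
  simp only [gibbsKernel, Matrix.smul_apply, Matrix.sum_apply, smul_eq_mul]
  exact mul_pos (by positivity) (sum_pos' (fun j _ => (heatBath_mem_rowStochastic hP j).1 ξ η)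
    ⟨i, mem_univ _, heatBath_pos hP h⟩)

lemma gibbsKernel_pow_card_apply_pos (hP : ∀ ξ, 0 < P ξ) (A : Finset Λ) {ξ η : Λ → S}
    (h : ∀ j ∉ A, ξ j = η j) : 0 < (gibbsKernel P ^ #A) ξ η := by
  induction A using Finset.induction_on generalizing η with
  | empty =>
    obtain rfl : ξ = η := funext fun j => h j (notMem_empty j)
    simp
  | insert a B ha ih =>
    set ζ := update η a (ξ a)
    have hξζ : ∀ j ∉ B, ξ j = ζ j := by
      intro j hj
      by_cases hja : j = a
      · subst hja; simp [ζ]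
      · simp [ζ, hja, h j (by simp [hja, hj])]
    have hζη : ∀ j ≠ a, ζ j = η j := fun j hj => update_of_ne hj _ _
    have : Nonempty Λ := ⟨a⟩
    rw [card_insert_of_notMem ha, pow_succ, mul_apply]
    exact sum_pos' (fun θ _ => mul_nonneg ((pow_mem (gibbsKernel_mem_rowStochastic hP) _).1 _ _)
      ((gibbsKernel_mem_rowStochastic hP).1 _ _))
      ⟨ζ, mem_univ _, mul_pos (ih hξζ) (gibbsKernel_pos hP hζη)⟩

lemma stochDominated_vecMul_gibbsKernel_pow [Nonempty Λ] [Preorder S] {P' : (Λ → S) → ℝ}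
    (hP : ∀ ξ, 0 < P ξ) (hP' : ∀ ξ, 0 < P' ξ)
    (hK : ∀ i {ξ ξ' : Λ → S}, ξ ≤ ξ' → StochDominated (heatBath P i ξ) (heatBath P' i ξ'))
    (n : ℕ) : StochDominated P (P ᵥ* gibbsKernel P' ^ n) := by
  induction n with
  | zero => rw [pow_zero, vecMul_one]; exact fun f _ => le_rfl
  | succ n ih =>
    have hstep := ih.vecMul (fun ξ => (hP ξ).le)
      (nonneg_vecMul_of_mem_rowStochastic (pow_mem (gibbsKernel_mem_rowStochastic hP') n)
        fun ξ => (hP ξ).le)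
      fun _ _ => stochDominated_gibbsKernel hK
    rwa [vecMul_gibbsKernel hP, vecMul_vecMul, ← pow_succ] at hstep

end GibbsSampler

theorem holley_inequality_general {Λ : Type*} [Fintype Λ] [DecidableEq Λ] [Nonempty Λ]
    (S : Finset ℝ)
    (P P' : (Λ → S) → ℝ)
    (hPpos : ∀ ξ, 0 < P ξ) (hP'pos : ∀ ξ, 0 < P' ξ)
    (hPsum : ∑ ξ : Λ → S, P ξ = 1) (hP'sum : ∑ ξ : Λ → S, P' ξ = 1)
    (hcond : ∀ (i : Λ) (ξ ξ' : Λ → S), ξ ≤ ξ' →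
      ∀ g : S → ℝ, Monotone g →
        (∑ s : S, P (Function.update ξ i s) * g s) /
          (∑ s : S, P (Function.update ξ i s)) ≤
        (∑ s : S, P' (Function.update ξ' i s) * g s) /
          (∑ s : S, P' (Function.update ξ' i s))) :
    ∀ f : (Λ → S) → ℝ, Monotone f →
      ∑ ξ : Λ → S, P ξ * f ξ ≤ ∑ ξ : Λ → S, P' ξ * f ξ := by
  intro f hf
  set M := gibbsKernel P' ^ Fintype.card Λ
  have hdom : ∀ k, StochDominated P (P ᵥ* M ^ k) := fun k => by
    rw [← pow_mul]
    exact stochDominated_vecMul_gibbsKernel_pow hPpos hP'pos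
      (fun i _ _ => stochDominated_heatBath hPpos hcond i) _
  have hlim : Tendsto (fun k => P ᵥ* M ^ k) atTop (𝓝 P') :=
    tendsto_vecMul_pow_of_vecMul_eq (pow_mem (gibbsKernel_mem_rowStochastic hP'pos) _)
      (fun _ _ => by simpa using gibbsKernel_pow_card_apply_pos hP'pos univ (by simp))
      (vecMul_pow_eq_self (vecMul_gibbsKernel hP'pos) _) (by simp [dotProduct_one, hPsum, hP'sum])
  exact ge_of_tendsto' (((continuous_id.dotProduct continuous_const).tendsto P').comp hlim)
    fun k => hdom k f hf

/-- **Holley's inequality.** Let `S` be a finite subset of `ℝ`, `Λ` a finite index set, and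
`P, P'` two probability measures on `S^Λ` giving positive weight to every configuration.
If for every site `i` and configurations `ξ ≤ ξ'` the single-site conditional distribution
of `P` at `i` given `ξ` off `i` is stochastically dominated by that of `P'` at `i` given
`ξ'` off `i`, then `P` is stochastically dominated by `P'`. -/
theorem holley_inequality {Λ : Type*} [Fintype Λ] [DecidableEq Λ] [Nonempty Λ]
    (S : Finset ℝ) (hS : S.Nonempty)
    (P P' : (Λ → S) → ℝ)
    (hPpos : ∀ ξ, 0 < P ξ) (hP'pos : ∀ ξ, 0 < P' ξ)
    (hPsum : ∑ ξ : Λ → S, P ξ = 1) (hP'sum : ∑ ξ : Λ → S, P' ξ = 1)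
    (hcond : ∀ (i : Λ) (ξ ξ' : Λ → S), ξ ≤ ξ' →
      ∀ g : S → ℝ, Monotone g →
        (∑ s : S, P (Function.update ξ i s) * g s) /
          (∑ s : S, P (Function.update ξ i s)) ≤
        (∑ s : S, P' (Function.update ξ' i s) * g s) /
          (∑ s : S, P' (Function.update ξ' i s))) :
    ∀ f : (Λ → S) → ℝ, Monotone f →
      ∑ ξ : Λ → S, P ξ * f ξ ≤ ∑ ξ : Λ → S, P' ξ * f ξ :=
  holley_inequality_general S P P' hPpos hP'pos hPsum hP'sum hcond
end

section
/- In the Edwards–Sokal coupling on a finite graph, the conditional distribution of the edge configuration given the spins is Bernoulli: each edge e = {i,j} with ξ_i = ξ_j is open independently with probability p = 1 − e^{−J}, and each edge with ξ_i ≠ ξ_j is closed; the conditional distribution of the spins given the edges assigns, independently for each cluster, spin +1 or −1 with probability 1/2 each. -/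
open Finset

namespace RandomCluster

variable {V : Type*} [Fintype V] [DecidableEq V]

/-- The graph of open edges of a bond configuration `η` on the edge set `F`. -/
def openGraph (F : Finset (Sym2 V)) (η : F → Bool) : SimpleGraph V :=
  SimpleGraph.fromEdgeSet {e : Sym2 V | ∃ h : e ∈ F, η ⟨e, h⟩ = true}

/-- The number of connected components of the graph of open edges (isolated
vertices included). -/
noncomputable def numClusters (F : Finset (Sym2 V)) (η : F → Bool) : ℕ :=
  Nat.card (openGraph F η).ConnectedComponent

/-- Number of open edges. -/
def numOpen (F : Finset (Sym2 V)) (η : F → Bool) : ℕ :=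
  (Finset.univ.filter fun e : F => η e = true).card

/-- Number of closed edges. -/
def numClosed (F : Finset (Sym2 V)) (η : F → Bool) : ℕ :=
  (Finset.univ.filter fun e : F => η e = false).card

/-- The (unnormalized) `q = 2` random-cluster weight `2^{k(η)} p^{o(η)} (1-p)^{c(η)}`. -/
noncomputable def rcWeight (F : Finset (Sym2 V)) (p : ℝ) (η : F → Bool) : ℝ :=
  2 ^ numClusters F η * p ^ numOpen F η * (1 - p) ^ numClosed F η

/-- The two endpoints of the edge `e` carry the same spin under `ξ`. -/
def SameSpin (ξ : V → Bool) (e : Sym2 V) : Prop :=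
  ∃ a b : V, e = s(a, b) ∧ ξ a = ξ b

open Classical in
/-- The Edwards–Sokal weight on pairs of a spin configuration `ξ : V → Bool`
(`true` = `+1`) and a bond configuration `η` on the edge set `F`, with `p = 1 - e^{-J}`. -/
noncomputable def esWeight (F : Finset (Sym2 V)) (p : ℝ) (ξ : V → Bool) (η : F → Bool) : ℝ :=
  ∏ e : F, (if η e then (if SameSpin ξ e then p else 0) else 1 - p)

open Classical in
/-- **Conditional distributions in the Edwards–Sokal coupling.** Given the spins, the
edges are independent Bernoulli: an edge with agreeing endpoints is open with
probability `p = 1 - e^{-J}` and an edge with disagreeing endpoints is closed. Given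
the edges, the spins are obtained by assigning, independently for each open cluster, the
spin `+1` or `-1` with probability `1/2` each. -/
theorem edwards_sokal_conditionals (F : Finset (Sym2 V)) (hF : ∀ e ∈ F, ¬ e.IsDiag)
    (J : ℝ) (hJ : 0 < J) (p : ℝ) (hp : p = 1 - Real.exp (-J)) :
    (∀ (ξ : V → Bool) (η : F → Bool),
      esWeight F p ξ η / (∑ η' : F → Bool, esWeight F p ξ η') =
        ∏ e : F, (if η e then (if SameSpin ξ (e : Sym2 V) then p else 0)
          else (if SameSpin ξ (e : Sym2 V) then 1 - p else 1))) ∧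
    (∀ (ξ : V → Bool) (η : F → Bool),
      esWeight F p ξ η / (∑ ξ' : V → Bool, esWeight F p ξ' η) =
        (if ∀ a b : V, (openGraph F η).Reachable a b → ξ a = ξ b then
          (1 / 2 : ℝ) ^ numClusters F η else 0)) := by
  have hq : 1 - p = Real.exp (-J) := by rw [hp]; ring
  have hq0 : (0:ℝ) < 1 - p := hq ▸ Real.exp_pos _
  have hp0 : 0 < p := by
    rw [hp]; have : Real.exp (-J) < 1 := by
      rw [Real.exp_lt_one_iff]; linarith
    linarith
  constructor
  · intro ξ η
    have hsum : (∑ η' : F → Bool, esWeight F p ξ η') =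
        ∏ e : F, ((if SameSpin ξ (e : Sym2 V) then p else 0) + (1 - p)) := by
      unfold esWeight
      have hps := Finset.prod_univ_sum (fun _ : F => (univ : Finset Bool))
        (fun e b => if b then (if SameSpin ξ (e : Sym2 V) then p else 0) else 1 - p)
      rw [Fintype.piFinset_univ] at hps
      rw [← hps]
      congr 1; ext e
      rw [Fintype.sum_bool]
      simp
    rw [hsum]
    unfold esWeight
    rw [← Finset.prod_div_distrib]
    congr 1; ext e
    by_cases hs : SameSpin ξ (e : Sym2 V) <;> by_cases he : η e <;>
      simp [hs, he, div_self, ne_of_gt hq0]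
  · intro ξ η
    set G := openGraph F η with hG
    -- constancy on clusters iff same spin on each open edge
    have key : ∀ ξ' : V → Bool,
        (∀ a b : V, G.Reachable a b → ξ' a = ξ' b) ↔
        (∀ e : F, η e = true → SameSpin ξ' (e : Sym2 V)) := by
      intro ξ'
      constructor
      · intro h e he
        obtain ⟨s, hs⟩ := e
        revert he
        revert hs
        induction s using Sym2.ind with
        | _ a b =>
          intro hs he
          refine ⟨a, b, rfl, ?_⟩
          by_cases hab : a = b
          · rw [hab]
          · have hadj : G.Adj a b := by
              rw [hG, openGraph, SimpleGraph.fromEdgeSet_adj]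
              exact ⟨⟨hs, he⟩, hab⟩
            exact h a b hadj.reachable
      · intro h a b hr
        obtain ⟨w⟩ := hr
        induction w with
        | nil => rfl
        | cons hadj w ih =>
          rename_i u v x
          have : ξ' u = ξ' v := by
            rw [hG, openGraph, SimpleGraph.fromEdgeSet_adj] at hadj
            obtain ⟨⟨hmem, hop⟩, hne⟩ := hadj
            obtain ⟨a', b', heq, hspin⟩ := h ⟨s(u, v), hmem⟩ hop
            rw [Sym2.eq_iff] at heq
            rcases heq with ⟨rfl, rfl⟩ | ⟨rfl, rfl⟩
            · exact hspin
            · exact hspin.symm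
          rw [this, ih]
    -- value of esWeight
    have hval : ∀ ξ' : V → Bool, esWeight F p ξ' η =
        if (∀ a b : V, G.Reachable a b → ξ' a = ξ' b) then
          p ^ numOpen F η * (1 - p) ^ numClosed F η else 0 := by
      intro ξ'
      by_cases hc : ∀ a b : V, G.Reachable a b → ξ' a = ξ' b
      · rw [if_pos hc]
        have h2 := (key ξ').mp hc
        unfold esWeight
        have step1 : (∏ e : F,
            (if η e then (if SameSpin ξ' (e : Sym2 V) then p else 0) else 1 - p)) =
            ∏ e : F, (if η e then p else 1 - p) := by
          refine Finset.prod_congr rfl (fun e _ => ?_)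
          by_cases he : η e
          · simp [he, h2 e he]
          · simp [he]
        rw [step1,
          ← Finset.prod_filter_mul_prod_filter_not univ (fun e : F => η e = true)]
        congr 1
        · have h3 : ∀ e ∈ filter (fun e : F => η e = true) univ,
              (if η e then p else 1 - p) = p := by
            intro e he
            simp only [mem_filter] at he
            simp [he.2]
          rw [Finset.prod_congr rfl h3, Finset.prod_const]
          rfl
        · have h4 : ∀ e ∈ filter (fun e : F => ¬ η e = true) univ,
              (if η e then p else 1 - p) = 1 - p := by
            intro e he
            simp only [mem_filter] at he
            simp [he.2]
          rw [Finset.prod_congr rfl h4, Finset.prod_const, numClosed]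
          congr 2
          ext e
          simp
      · rw [if_neg hc]
        have hex : ∃ e : F, η e = true ∧ ¬ SameSpin ξ' (e : Sym2 V) := by
          by_contra hcon
          push_neg at hcon
          exact hc ((key ξ').mpr hcon)
        obtain ⟨e, he, hns⟩ := hex
        exact Finset.prod_eq_zero (Finset.mem_univ e) (by simp [he, hns])
    -- counting constant configurations
    have hcard : (univ.filter (fun ξ' : V → Bool =>
        ∀ a b : V, G.Reachable a b → ξ' a = ξ' b)).card = 2 ^ numClusters F η := by
      have e : {ξ' : V → Bool // ∀ a b : V, G.Reachable a b → ξ' a = ξ' b} ≃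
          (G.ConnectedComponent → Bool) := by
        refine ⟨fun ξ' => SimpleGraph.ConnectedComponent.lift ξ'.1
            (fun v w pw _ => ξ'.2 v w ⟨pw⟩),
          fun g => ⟨fun v => g (G.connectedComponentMk v), fun a b hr => by
            simp [SimpleGraph.ConnectedComponent.sound hr]⟩, ?_, ?_⟩
        · intro ξ'; ext v; rfl
        · intro g; ext c
          refine c.ind (fun v => ?_)
          rfl
      have h1 : (univ.filter (fun ξ' : V → Bool =>
          ∀ a b : V, G.Reachable a b → ξ' a = ξ' b)).card =
          Nat.card {ξ' : V → Bool // ∀ a b : V, G.Reachable a b → ξ' a = ξ' b} := by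
        rw [Nat.card_eq_fintype_card, Fintype.card_subtype]
      rw [h1, Nat.card_congr e, Nat.card_fun, Nat.card_eq_fintype_card (α := Bool)]
      rfl
    -- compute the sum
    have hsum : (∑ ξ' : V → Bool, esWeight F p ξ' η) =
        2 ^ numClusters F η * (p ^ numOpen F η * (1 - p) ^ numClosed F η) := by
      calc (∑ ξ' : V → Bool, esWeight F p ξ' η)
          = ∑ ξ' : V → Bool, if (∀ a b : V, G.Reachable a b → ξ' a = ξ' b) then
              p ^ numOpen F η * (1 - p) ^ numClosed F η else 0 := by
            exact Finset.sum_congr rfl (fun ξ' _ => hval ξ')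
        _ = (univ.filter (fun ξ' : V → Bool =>
              ∀ a b : V, G.Reachable a b → ξ' a = ξ' b)).card *
              (p ^ numOpen F η * (1 - p) ^ numClosed F η) := by
            rw [← Finset.sum_filter, Finset.sum_const, nsmul_eq_mul]
        _ = _ := by rw [hcard]; push_cast; ring
    rw [hval ξ, hsum]
    by_cases hc : ∀ a b : V, G.Reachable a b → ξ a = ξ b
    · rw [if_pos hc, if_pos hc]
      have hw : p ^ numOpen F η * (1 - p) ^ numClosed F η ≠ 0 :=
        mul_ne_zero (pow_ne_zero _ (ne_of_gt hp0)) (pow_ne_zero _ (ne_of_gt hq0))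
      have h2k : (2:ℝ) ^ numClusters F η ≠ 0 := by positivity
      rw [div_eq_iff (mul_ne_zero h2k hw), div_pow, one_pow]
      field_simp
    · rw [if_neg hc, if_neg hc, zero_div]

end RandomCluster
end

section
/- On a finite graph, the spin marginal of the Edwards–Sokal measure with parameter p = 1 − e^{−J} equals the Ising model Gibbs distribution ∝ exp(−J·#{edges with disagreeing endpoints}), and the edge marginal equals the random-cluster measure ∝ 2^{k(η)} p^{o(η)} (1−p)^{c(η)}. -/
set_option linter.unusedSectionVars false

open Finset

namespace RandomCluster

variable {V : Type*} [Fintype V] [DecidableEq V]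

lemma sameSpin_pair (ξ : V → Bool) (a b : V) : SameSpin ξ s(a, b) ↔ ξ a = ξ b := by
  constructor
  · rintro ⟨c, d, hcd, h⟩
    rw [Sym2.eq_iff] at hcd
    rcases hcd with ⟨h1, h2⟩ | ⟨h1, h2⟩ <;> subst h1 <;> subst h2
    · exact h
    · exact h.symm
  · exact fun h => ⟨a, b, rfl, h⟩

lemma walk_const {G : SimpleGraph V} {ξ : V → Bool}
    (h : ∀ a b, G.Adj a b → ξ a = ξ b) : ∀ {v w : V}, G.Walk v w → ξ v = ξ w := by
  intro v w pw
  induction pw with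
  | nil => rfl
  | cons hadj _ ih => exact (h _ _ hadj).trans ih

/-- Compatibility of a spin configuration with a bond configuration. -/
def Compat (F : Finset (Sym2 V)) (η : F → Bool) (ξ : V → Bool) : Prop :=
  ∀ e : F, η e = true → SameSpin ξ (e : Sym2 V)

lemma compat_iff_adj (F : Finset (Sym2 V)) (η : F → Bool) (ξ : V → Bool) :
    Compat F η ξ ↔ ∀ a b, (openGraph F η).Adj a b → ξ a = ξ b := by
  constructor
  · intro hc a b hadj
    rw [openGraph, SimpleGraph.fromEdgeSet_adj] at hadj
    obtain ⟨⟨hmem, hopen⟩, _⟩ := hadj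
    exact (sameSpin_pair ξ a b).mp (hc ⟨s(a, b), hmem⟩ hopen)
  · rintro h ⟨e, he⟩ hopen
    induction e using Sym2.inductionOn with
    | hf a b =>
      rcases eq_or_ne a b with rfl | hab
      · exact ⟨a, a, rfl, rfl⟩
      · refine (sameSpin_pair ξ a b).mpr (h a b ?_)
        rw [openGraph, SimpleGraph.fromEdgeSet_adj]
        exact ⟨⟨he, hopen⟩, hab⟩

open Classical in
/-- Spin configurations compatible with `η` correspond to colorings of the clusters. -/
noncomputable def compatEquiv (F : Finset (Sym2 V)) (η : F → Bool) :
    {ξ : V → Bool // Compat F η ξ} ≃ ((openGraph F η).ConnectedComponent → Bool) where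
  toFun ξ := SimpleGraph.ConnectedComponent.lift ξ.1
    (fun _ _ pw _ => walk_const (fun a b hadj =>
      ((compat_iff_adj F η ξ.1).mp ξ.2) a b hadj) pw)
  invFun g := ⟨fun v => g ((openGraph F η).connectedComponentMk v), by
    refine (compat_iff_adj F η _).mpr fun a b hadj => ?_
    rw [SimpleGraph.ConnectedComponent.connectedComponentMk_eq_of_adj hadj]⟩
  left_inv ξ := by ext v; rfl
  right_inv g := by
    ext c
    induction c using SimpleGraph.ConnectedComponent.ind with
    | _ v => rfl

open Classical in
/-- **Marginals of the Edwards–Sokal measure.** On a finite graph with `p = 1 - e^{-J}`,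
the spin marginal of the Edwards–Sokal measure is the Ising Gibbs weight
`exp(-J ⬝ #{edges with disagreeing endpoints})`, and the edge marginal is the
random-cluster weight `2^{k(η)} p^{o(η)} (1-p)^{c(η)}`. -/
theorem edwards_sokal_marginals (F : Finset (Sym2 V)) (hF : ∀ e ∈ F, ¬ e.IsDiag)
    (J : ℝ) (hJ : 0 < J) (p : ℝ) (hp : p = 1 - Real.exp (-J)) :
    (∀ ξ : V → Bool,
      ∑ η : F → Bool, esWeight F p ξ η =
        Real.exp (-(J * ((Finset.univ.filter
          fun e : F => ¬ SameSpin ξ (e : Sym2 V)).card : ℝ)))) ∧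
    (∀ η : F → Bool,
      ∑ ξ : V → Bool, esWeight F p ξ η = rcWeight F p η) := by
  have h1p : 1 - p = Real.exp (-J) := by rw [hp]; ring
  constructor
  · intro ξ
    have hswap : ∑ η : F → Bool, esWeight F p ξ η =
        ∏ e : F, ∑ b : Bool, (if b then (if SameSpin ξ (e : Sym2 V) then p else 0) else 1 - p) := by
      rw [Finset.prod_univ_sum]
      rw [Fintype.piFinset_univ]
      rfl
    rw [hswap]
    have hsum : ∀ e : F, (∑ b : Bool,
        (if b then (if SameSpin ξ (e : Sym2 V) then p else 0) else 1 - p)) =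
        if SameSpin ξ (e : Sym2 V) then 1 else 1 - p := by
      intro e
      by_cases h : SameSpin ξ (e : Sym2 V) <;> simp [h] <;> ring
    rw [Finset.prod_congr rfl (fun e _ => hsum e)]
    rw [Finset.prod_ite, Finset.prod_const, Finset.prod_const, one_pow, one_mul]
    rw [h1p, ← Real.exp_nat_mul]
    congr 1
    push_cast
    ring
  · intro η
    have hW : ∀ ξ : V → Bool, esWeight F p ξ η =
        if Compat F η ξ then p ^ numOpen F η * (1 - p) ^ numClosed F η else 0 := by
      intro ξ
      by_cases hc : Compat F η ξ
      · rw [if_pos hc]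
        unfold esWeight
        have : ∀ e : F, (if η e then (if SameSpin ξ (e : Sym2 V) then p else 0) else 1 - p)
            = if η e then p else 1 - p := by
          intro e
          by_cases ho : η e = true
          · rw [if_pos ho, if_pos ho, if_pos (hc e ho)]
          · rw [if_neg ho, if_neg ho]
        rw [Finset.prod_congr rfl (fun e _ => this e), Finset.prod_ite,
          Finset.prod_const, Finset.prod_const]
        have hfe : (Finset.univ.filter (fun e : F => ¬ η e = true)) =
            (Finset.univ.filter (fun e : F => η e = false)) := by
          ext e; simp
        rw [hfe]
        rfl
      · rw [if_neg hc]
        simp only [Compat, not_forall] at hc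
        obtain ⟨e, hopen, hns⟩ := hc
        refine Finset.prod_eq_zero (Finset.mem_univ e) ?_
        rw [if_pos hopen, if_neg hns]
    rw [Finset.sum_congr rfl (fun ξ _ => hW ξ)]
    rw [Finset.sum_ite, Finset.sum_const, Finset.sum_const_zero, add_zero, nsmul_eq_mul]
    have hcard : (Finset.univ.filter (Compat F η)).card = 2 ^ numClusters F η := by
      have h1 : (Finset.univ.filter (Compat F η)).card =
          Nat.card {ξ : V → Bool // Compat F η ξ} := by
        rw [Nat.card_eq_fintype_card, Fintype.card_subtype]
      rw [h1, Nat.card_congr (compatEquiv F η), Nat.card_fun, Nat.card_eq_fintype_card (α := Bool),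
        Fintype.card_bool, numClusters]
    rw [hcard, rcWeight]
    push_cast
    ring

end RandomCluster
end
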